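/- Let q be a real number with 0 < q < 1, let k ≥ 1 and n ≥ 1 be natural numbers, and let x_1, …, x_k be nonnegative real numbers. Then the family indexed by tuples (r_1,…,r_k) ∈ ℕ^k of terms C_q(n + s_k − 1; r_1,…,r_k) · ∏_{j=1}^{k} [ x_j^{r_j} · q^{r_j(r_j−1)/2} / ∏_{i=1}^{s_k − s_{j−1}} (1 + x_j q^{n + i − 1}) ] is summable, and its sum equals ∏_{j=1}^{k} ∏_{i=1}^{n} (1 + x_j q^{i−1}); here s_j = r_1 + ⋯ + r_j with s_0 = 0 and s_k = r_1 + ⋯ + r_k. -/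

import Mathlib

noncomputable def qNum (q : ℝ) (m : ℤ) : ℝ := (1 - q ^ m) / (1 - q)

noncomputable def qFactorial (q : ℝ) (n : ℕ) : ℝ :=
  ∏ i ∈ Finset.range n, qNum q ((i : ℤ) + 1)

noncomputable def qFacOrd (q : ℝ) (x : ℤ) (r : ℕ) : ℝ :=
  ∏ i ∈ Finset.range r, qNum q (x - (i : ℤ))

noncomputable def qMultinomial (q : ℝ) (x : ℤ) {k : ℕ} (r : Fin k → ℕ) : ℝ :=
  qFacOrd q x (∑ j, r j) / ∏ j, qFactorial q (r j)

/-!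
For one variable the series has a probabilistic meaning. Run independent trials in which
trial `i` succeeds with odds `x q^i`, i.e. with probability `x q^i / (1 + x q^i)`. Then the
`r`-th term divided by `∏_{i<n} (1 + x q^i)` is the probability that the `n`-th failure
happens at trial `n + r`, so the partial sum up to `R` is `∏_{i<n} (1 + x q^i)` times the
probability of at most `R` successes among the first `n + R` trials. Rothe's q-binomial
theorem `∏_{i<N} (1 + x q^i) = ∑_s q^(s(s-1)/2) [N choose s]_q x^s` expresses this as a
finite sum whose complement consists of `n` terms, each tending to `0` because
`q^(s(s-1)/2)` beats every geometric sequence.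

For `k` variables, induct on `k`: with `r_2, …, r_k` fixed, the q-multinomial factors as a
q-binomial in `r_1` times a smaller q-multinomial, and the sum over `r_1` is the
one-variable series with `n` replaced by `n + r_2 + ⋯ + r_k`.
-/

open Finset Filter Topology

variable {q : ℝ}

lemma qNum_natCast (q : ℝ) (m : ℕ) : qNum q m = (1 - q ^ m) / (1 - q) := by
  rw [qNum, zpow_natCast]

lemma qNum_zero (q : ℝ) : qNum q 0 = 0 := by
  simp [qNum]

lemma qNum_natCast_add (q : ℝ) (a b : ℕ) : qNum q (a + b : ℕ) = qNum q a + q ^ a * qNum q b := by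
  simp only [qNum_natCast, pow_add]
  ring

lemma qNum_natCast_nonneg (hq0 : 0 ≤ q) (hq1 : q < 1) (m : ℕ) : 0 ≤ qNum q m := by
  rw [qNum_natCast]
  exact div_nonneg (sub_nonneg.2 (pow_le_one₀ hq0 hq1.le)) (sub_nonneg.2 hq1.le)

lemma qNum_natCast_le (hq0 : 0 ≤ q) (hq1 : q < 1) (m : ℕ) : qNum q m ≤ (1 - q)⁻¹ := by
  rw [qNum_natCast, div_eq_mul_inv]
  exact mul_le_of_le_one_left (inv_nonneg.2 (sub_nonneg.2 hq1.le))
    (sub_le_self _ (pow_nonneg hq0 m))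

lemma one_le_qNum_natCast_succ (hq0 : 0 ≤ q) (hq1 : q < 1) (m : ℕ) : 1 ≤ qNum q (m + 1 : ℕ) := by
  rw [qNum_natCast, le_div_iff₀ (sub_pos.2 hq1), one_mul]
  linarith [pow_le_of_le_one (n := m + 1) hq0 hq1.le (by omega)]

lemma qNum_nonneg (hq0 : 0 ≤ q) (hq1 : q < 1) {m : ℤ} (hm : 0 ≤ m) : 0 ≤ qNum q m := by
  lift m to ℕ using hm
  exact qNum_natCast_nonneg hq0 hq1 m

lemma one_le_qFactorial (hq0 : 0 ≤ q) (hq1 : q < 1) (n : ℕ) : 1 ≤ qFactorial q n :=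
  one_le_prod fun i _ => by exact_mod_cast one_le_qNum_natCast_succ hq0 hq1 i

lemma qFactorial_succ (q : ℝ) (n : ℕ) :
    qFactorial q (n + 1) = qFactorial q n * qNum q (n + 1 : ℕ) := by
  rw [qFactorial, prod_range_succ, ← qFactorial]
  push_cast
  rfl

lemma qFacOrd_add (q : ℝ) (N : ℤ) (a c : ℕ) :
    qFacOrd q N (a + c) = qFacOrd q N a * qFacOrd q (N - a) c := by
  rw [qFacOrd, qFacOrd, qFacOrd, prod_range_add]
  congr 1
  refine prod_congr rfl fun i _ => ?_
  push_cast
  ring_nf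

lemma qFacOrd_succ' (q : ℝ) (N : ℤ) (r : ℕ) :
    qFacOrd q N (r + 1) = qNum q N * qFacOrd q (N - 1) r := by
  rw [add_comm, qFacOrd_add]
  simp [qFacOrd]

lemma qFacOrd_nonneg (hq0 : 0 ≤ q) (hq1 : q < 1) {N : ℤ} {r : ℕ} (h : (r : ℤ) ≤ N + 1) :
    0 ≤ qFacOrd q N r :=
  prod_nonneg fun i hi => qNum_nonneg hq0 hq1 (by have := mem_range.1 hi; omega)

lemma qFacOrd_le (hq0 : 0 ≤ q) (hq1 : q < 1) {N r : ℕ} (h : r ≤ N) :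
    qFacOrd q N r ≤ (1 - q)⁻¹ ^ r := by
  have hN : ∀ i ∈ range r, (N : ℤ) - i = (N - i : ℕ) := fun i hi => by
    have := mem_range.1 hi; omega
  calc qFacOrd q N r ≤ ∏ _i ∈ range r, (1 - q)⁻¹ :=
        prod_le_prod (fun i hi => hN i hi ▸ qNum_natCast_nonneg hq0 hq1 _)
          (fun i hi => hN i hi ▸ qNum_natCast_le hq0 hq1 _)
    _ = (1 - q)⁻¹ ^ r := by rw [prod_const, card_range]

noncomputable def qBinom (q : ℝ) (N : ℤ) (r : ℕ) : ℝ := qFacOrd q N r / qFactorial q r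

@[simp]
lemma qBinom_zero_right (q : ℝ) (N : ℤ) : qBinom q N 0 = 1 := by
  simp [qBinom, qFacOrd, qFactorial]

lemma qBinom_eq_zero_of_lt (q : ℝ) {N r : ℕ} (h : N < r) : qBinom q N r = 0 := by
  rw [qBinom, qFacOrd, prod_eq_zero (mem_range.2 h) (by simp [qNum_zero]), zero_div]

lemma qBinom_nonneg (hq0 : 0 ≤ q) (hq1 : q < 1) {N : ℤ} {r : ℕ} (h : (r : ℤ) ≤ N + 1) :
    0 ≤ qBinom q N r :=
  div_nonneg (qFacOrd_nonneg hq0 hq1 h) (zero_le_one.trans (one_le_qFactorial hq0 hq1 r))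

lemma qBinom_le (hq0 : 0 ≤ q) (hq1 : q < 1) {N r : ℕ} (h : r ≤ N) :
    qBinom q N r ≤ (1 - q)⁻¹ ^ r :=
  (div_le_self (qFacOrd_nonneg hq0 hq1 (by omega)) (one_le_qFactorial hq0 hq1 r)).trans
    (qFacOrd_le hq0 hq1 h)

lemma qBinom_succ_succ (hq0 : 0 ≤ q) (hq1 : q < 1) (N s : ℕ) :
    qBinom q (N + 1 : ℕ) (s + 1) = qBinom q N (s + 1) + q ^ (N - s) * qBinom q N s := by
  rcases lt_or_ge N s with h | h
  · rw [qBinom_eq_zero_of_lt q (Nat.succ_lt_succ h), qBinom_eq_zero_of_lt q h,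
      qBinom_eq_zero_of_lt q (Nat.lt_succ_of_lt h)]
    ring
  obtain ⟨d, rfl⟩ := Nat.exists_eq_add_of_le h
  have hlast : qFacOrd q (s + d : ℕ) (s + 1) = qFacOrd q (s + d : ℕ) s * qNum q d := by
    rw [qFacOrd_add]; simp [qFacOrd]
  have hfirst : qFacOrd q (s + d + 1 : ℕ) (s + 1)
      = qNum q (d + (s + 1) : ℕ) * qFacOrd q (s + d : ℕ) s := by
    rw [qFacOrd_succ']; congr 2 <;> push_cast <;> ring
  have hs : qNum q (s + 1 : ℕ) ≠ 0 :=
    (zero_lt_one.trans_le (one_le_qNum_natCast_succ hq0 hq1 s)).ne'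
  have hf : qFactorial q s ≠ 0 := (zero_lt_one.trans_le (one_le_qFactorial hq0 hq1 s)).ne'
  rw [qBinom, qBinom, qBinom, hlast, hfirst, qNum_natCast_add, qFactorial_succ,
    Nat.add_sub_cancel_left]
  field_simp

noncomputable def rotheTerm (q x : ℝ) (N s : ℕ) : ℝ := qBinom q N s * q ^ (s * (s - 1) / 2) * x ^ s

lemma rotheTerm_zero_right (q x : ℝ) (N : ℕ) : rotheTerm q x N 0 = 1 := by
  simp [rotheTerm]

lemma rotheTerm_succ_succ (hq0 : 0 ≤ q) (hq1 : q < 1) (x : ℝ) (N s : ℕ) :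
    rotheTerm q x (N + 1) (s + 1) = rotheTerm q x N (s + 1) + x * q ^ N * rotheTerm q x N s := by
  rw [rotheTerm, rotheTerm, rotheTerm, qBinom_succ_succ hq0 hq1]
  rcases lt_or_ge N s with h | h
  · simp [qBinom_eq_zero_of_lt q h]
  have hexp : N - s + (s + 1) * (s + 1 - 1) / 2 = N + (s * (s - 1) / 2) := by
    rw [Nat.triangle_succ]; omega
  have hpow : q ^ (N - s) * q ^ ((s + 1) * (s + 1 - 1) / 2) = q ^ N * q ^ (s * (s - 1) / 2) := by
    rw [← pow_add, ← pow_add, hexp]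
  linear_combination x ^ (s + 1) * qBinom q N s * hpow

lemma sum_range_rotheTerm_succ (hq0 : 0 ≤ q) (hq1 : q < 1) (x : ℝ) (N R : ℕ) :
    ∑ s ∈ range (R + 1), rotheTerm q x (N + 1) s
      = ∑ s ∈ range (R + 1), rotheTerm q x N s + x * q ^ N * ∑ s ∈ range R, rotheTerm q x N s := by
  simp only [sum_range_succ' _ R, rotheTerm_succ_succ hq0 hq1, sum_add_distrib, mul_sum,
    rotheTerm_zero_right]
  ring

lemma prod_one_add_mul_pow_eq_sum_rotheTerm (hq0 : 0 ≤ q) (hq1 : q < 1) (x : ℝ) (N : ℕ) :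
    ∏ i ∈ range N, (1 + x * q ^ i) = ∑ s ∈ range (N + 1), rotheTerm q x N s := by
  induction N with
  | zero => simp [rotheTerm_zero_right]
  | succ N ih =>
    rw [sum_range_rotheTerm_succ hq0 hq1, sum_range_succ _ (N + 1),
      rotheTerm, qBinom_eq_zero_of_lt q N.lt_succ_self, prod_range_succ, ih]
    ring

lemma tendsto_pow_mul_pow_triangle_atTop_nhds_zero {𝕜 : Type*} [NormedField 𝕜] [CompleteSpace 𝕜]
    {q : 𝕜} (hq : ‖q‖ < 1) (y : 𝕜) :
    Tendsto (fun s : ℕ => y ^ s * q ^ (s * (s - 1) / 2)) atTop (𝓝 0) := by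
  have hstep : ∀ s : ℕ, y ^ (s + 1) * q ^ ((s + 1) * (s + 1 - 1) / 2)
      = y * q ^ s * (y ^ s * q ^ (s * (s - 1) / 2)) := fun s => by
    rw [Nat.triangle_succ, pow_add, pow_succ]; ring
  have hratio : Tendsto (fun s : ℕ => y * q ^ s) atTop (𝓝 0) := by
    simpa using (tendsto_pow_atTop_nhds_zero_of_norm_lt_one hq).const_mul y
  have hsmall : ∀ᶠ s : ℕ in atTop, ‖y * q ^ s‖ < 1 / 2 :=
    hratio.norm.eventually (gt_mem_nhds (by norm_num))
  refine (summable_of_ratio_norm_eventually_le (r := 1 / 2) (by norm_num) ?_).tendsto_atTop_zero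
  filter_upwards [hsmall] with s hs
  rw [hstep, norm_mul]
  exact mul_le_mul_of_nonneg_right hs.le (norm_nonneg _)

lemma qBinom_natCast_nonneg (hq0 : 0 ≤ q) (hq1 : q < 1) (N s : ℕ) : 0 ≤ qBinom q N s := by
  rcases le_or_gt s N with h | h
  · exact qBinom_nonneg hq0 hq1 (by omega)
  · rw [qBinom_eq_zero_of_lt q h]

lemma rotheTerm_nonneg (hq0 : 0 ≤ q) (hq1 : q < 1) {x : ℝ} (hx : 0 ≤ x) (N s : ℕ) :
    0 ≤ rotheTerm q x N s :=
  have := qBinom_natCast_nonneg hq0 hq1 N s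
  by unfold rotheTerm; positivity

lemma rotheTerm_le (hq0 : 0 ≤ q) (hq1 : q < 1) {x : ℝ} (hx : 0 ≤ x) {N s : ℕ} (h : s ≤ N) :
    rotheTerm q x N s ≤ ((1 - q)⁻¹ * x) ^ s * q ^ (s * (s - 1) / 2) := by
  calc rotheTerm q x N s = qBinom q N s * (q ^ (s * (s - 1) / 2) * x ^ s) := mul_assoc _ _ _
    _ ≤ (1 - q)⁻¹ ^ s * (q ^ (s * (s - 1) / 2) * x ^ s) :=
      mul_le_mul_of_nonneg_right (qBinom_le hq0 hq1 h) (by positivity)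
    _ = ((1 - q)⁻¹ * x) ^ s * q ^ (s * (s - 1) / 2) := by ring

lemma one_le_prod_one_add_mul_pow (hq0 : 0 ≤ q) {x : ℝ} (hx : 0 ≤ x) (n R : ℕ) :
    1 ≤ ∏ i ∈ range R, (1 + x * q ^ (n + i)) :=
  one_le_prod fun _ _ => le_add_of_nonneg_right (by positivity)

lemma tendsto_sum_range_rotheTerm_div (hq0 : 0 ≤ q) (hq1 : q < 1) {x : ℝ} (hx : 0 ≤ x) (n : ℕ) :
    Tendsto (fun R => (∑ s ∈ range (R + 1), rotheTerm q x (n + R) s)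
        / ∏ i ∈ range R, (1 + x * q ^ (n + i))) atTop (𝓝 (∏ i ∈ range n, (1 + x * q ^ i))) := by
  have hD := one_le_prod_one_add_mul_pow hq0 hx n
  have hsplit : ∀ R, (∑ s ∈ range (R + 1), rotheTerm q x (n + R) s)
      / ∏ i ∈ range R, (1 + x * q ^ (n + i)) = ∏ i ∈ range n, (1 + x * q ^ i)
        - (∑ j ∈ range n, rotheTerm q x (n + R) (R + 1 + j))
          / ∏ i ∈ range R, (1 + x * q ^ (n + i)) := fun R => by
    have h := prod_one_add_mul_pow_eq_sum_rotheTerm hq0 hq1 x (n + R)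
    rw [show n + R + 1 = R + 1 + n by ring, sum_range_add, prod_range_add] at h
    have := (zero_lt_one.trans_le (hD R)).ne'
    field_simp
    linear_combination -h
  have hbound : Tendsto (fun R => ∑ j ∈ range n,
      ((1 - q)⁻¹ * x) ^ (R + 1 + j) * q ^ ((R + 1 + j) * (R + 1 + j - 1) / 2)) atTop (𝓝 0) := by
    have hu := tendsto_pow_mul_pow_triangle_atTop_nhds_zero
      (by rwa [Real.norm_of_nonneg hq0]) ((1 - q)⁻¹ * x)
    simpa only [sum_const_zero, ← add_assoc] using
      tendsto_finsetSum (range n) fun j _ => (tendsto_add_atTop_iff_nat (1 + j)).2 hu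
  have hrem : Tendsto (fun R => (∑ j ∈ range n, rotheTerm q x (n + R) (R + 1 + j))
      / ∏ i ∈ range R, (1 + x * q ^ (n + i))) atTop (𝓝 0) := by
    refine squeeze_zero (fun R => ?_) (fun R => ?_) hbound
    · exact div_nonneg (sum_nonneg fun j _ => rotheTerm_nonneg hq0 hq1 hx _ _)
        (zero_le_one.trans (hD R))
    · exact (div_le_self (sum_nonneg fun j _ => rotheTerm_nonneg hq0 hq1 hx _ _) (hD R)).trans
        (sum_le_sum fun j hj => rotheTerm_le hq0 hq1 hx (by have := mem_range.1 hj; omega))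
  simpa [hsplit] using tendsto_const_nhds.sub hrem

noncomputable def negQBinomTerm (q x : ℝ) (n r : ℕ) : ℝ :=
  qBinom q ((n : ℤ) + r - 1) r * (x ^ r * q ^ (r * (r - 1) / 2))
    / ∏ i ∈ range r, (1 + x * q ^ (n + i))

lemma negQBinomTerm_nonneg (hq0 : 0 ≤ q) (hq1 : q < 1) {x : ℝ} (hx : 0 ≤ x) (n r : ℕ) :
    0 ≤ negQBinomTerm q x n r :=
  have := qBinom_nonneg (q := q) (N := (n : ℤ) + r - 1) (r := r) hq0 hq1 (by omega)
  by unfold negQBinomTerm; positivity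

lemma sum_range_negQBinomTerm (hq0 : 0 ≤ q) (hq1 : q < 1) {x : ℝ} (hx : 0 ≤ x) (n R : ℕ) :
    ∑ r ∈ range (R + 1), negQBinomTerm q x n r
      = (∑ s ∈ range (R + 1), rotheTerm q x (n + R) s) / ∏ i ∈ range R, (1 + x * q ^ (n + i)) := by
  induction R with
  | zero => simp [negQBinomTerm, rotheTerm_zero_right]
  | succ R ih =>
    have hD := (zero_lt_one.trans_le (one_le_prod_one_add_mul_pow hq0 hx n R)).ne'
    have hlast : 1 + x * q ^ (n + R) ≠ 0 := by positivity
    have hterm : negQBinomTerm q x n (R + 1)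
        = rotheTerm q x (n + R) (R + 1) / ∏ i ∈ range (R + 1), (1 + x * q ^ (n + i)) := by
      rw [negQBinomTerm, rotheTerm, show (n : ℤ) + (R + 1 : ℕ) - 1 = (n + R : ℕ) by push_cast; ring]
      ring
    rw [sum_range_succ, ih, hterm, ← add_assoc, sum_range_rotheTerm_succ hq0 hq1,
      sum_range_succ _ (R + 1), prod_range_succ]
    field_simp
    ring

lemma hasSum_negQBinomTerm (hq0 : 0 ≤ q) (hq1 : q < 1) {x : ℝ} (hx : 0 ≤ x) (n : ℕ) :
    HasSum (negQBinomTerm q x n) (∏ i ∈ range n, (1 + x * q ^ i)) := by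
  rw [hasSum_iff_tendsto_nat_of_nonneg (negQBinomTerm_nonneg hq0 hq1 hx n),
    ← tendsto_add_atTop_iff_nat 1]
  simpa only [sum_range_negQBinomTerm hq0 hq1 hx] using
    tendsto_sum_range_rotheTerm_div hq0 hq1 hx n

lemma qMultinomial_cons (q : ℝ) (N : ℤ) {k : ℕ} (b : ℕ) (r : Fin k → ℕ) :
    qMultinomial q N (Fin.cons b r) = qBinom q N b * qMultinomial q (N - b) r := by
  rw [qMultinomial, qMultinomial, qBinom, Fin.sum_cons, qFacOrd_add, Fin.prod_univ_succ]
  simp only [Fin.cons_zero, Fin.cons_succ]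
  exact mul_div_mul_comm _ _ _ _

lemma sum_filter_lt_succ_cons {k : ℕ} (b : ℕ) (r : Fin k → ℕ) (j : Fin k) :
    ∑ i ∈ univ.filter (· < j.succ), (Fin.cons b r : Fin (k + 1) → ℕ) i
      = b + ∑ i ∈ univ.filter (· < j), r i := by
  rw [sum_filter, sum_filter, Fin.sum_univ_succ]
  simp [Fin.succ_lt_succ_iff, Fin.succ_pos]

noncomputable def negQMultinomialTerm (q : ℝ) (n : ℕ) {k : ℕ} (x : Fin k → ℝ) (r : Fin k → ℕ) : ℝ :=
  qMultinomial q ((n : ℤ) + (∑ i, r i) - 1) r *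
    ∏ j : Fin k, x j ^ r j * q ^ (r j * (r j - 1) / 2) /
      ∏ i ∈ range ((∑ i', r i') - ∑ i' ∈ univ.filter (· < j), r i'), (1 + x j * q ^ (n + i))

lemma negQMultinomialTerm_cons (q : ℝ) (n : ℕ) {k : ℕ} (x : Fin (k + 1) → ℝ) (b : ℕ)
    (r : Fin k → ℕ) :
    negQMultinomialTerm q n x (Fin.cons b r)
      = negQBinomTerm q (x 0) (n + ∑ i, r i) b * negQMultinomialTerm q n (Fin.tail x) r
        / ∏ i ∈ range (∑ i, r i), (1 + x 0 * q ^ (n + i)) := by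
  rw [negQMultinomialTerm, negQMultinomialTerm, negQBinomTerm, Fin.prod_univ_succ, Fin.sum_cons]
  simp only [Fin.cons_zero, Fin.cons_succ, sum_filter_lt_succ_cons, Fin.not_lt_zero,
    filter_false, sum_empty, Nat.sub_zero, Nat.add_sub_add_left, qMultinomial_cons, Fin.tail]
  generalize ∑ i, r i = s
  rw [add_comm b s, prod_range_add,
    show (n : ℤ) + (s + b : ℕ) - 1 - b = n + s - 1 by push_cast; ring,
    show (n : ℤ) + (s + b : ℕ) - 1 = (n + s : ℕ) + b - 1 by push_cast; ring]
  simp only [add_assoc]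
  ring

lemma negQMultinomialTerm_nonneg (hq0 : 0 ≤ q) (hq1 : q < 1) (n : ℕ) {k : ℕ} {x : Fin k → ℝ}
    (hx : ∀ j, 0 ≤ x j) (r : Fin k → ℕ) : 0 ≤ negQMultinomialTerm q n x r := by
  have hmult : 0 ≤ qMultinomial q ((n : ℤ) + (∑ i, r i) - 1) r :=
    div_nonneg (qFacOrd_nonneg hq0 hq1 (by push_cast; omega))
      (prod_nonneg fun j _ => zero_le_one.trans (one_le_qFactorial hq0 hq1 _))
  refine mul_nonneg hmult (prod_nonneg fun j _ => ?_)
  have := hx j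
  positivity

theorem hasSum_prod_of_nonneg {β γ : Type*} {f : β × γ → ℝ} {g : β → ℝ} {a : ℝ} (hf : 0 ≤ f)
    (hfg : ∀ b, HasSum (fun c => f (b, c)) (g b)) (hg : HasSum g a) : HasSum f a := by
  have hs : Summable f := (summable_prod_of_nonneg hf).2
    ⟨fun b => (hfg b).summable, hg.summable.congr fun b => (hfg b).tsum_eq.symm⟩
  exact (hs.hasSum.prod_fiberwise hfg).unique hg ▸ hs.hasSum

theorem hasSum_negQMultinomialTerm (hq0 : 0 ≤ q) (hq1 : q < 1) (n k : ℕ) (x : Fin k → ℝ)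
    (hx : ∀ j, 0 ≤ x j) :
    HasSum (negQMultinomialTerm q n x) (∏ j, ∏ i ∈ range n, (1 + x j * q ^ i)) := by
  induction k with
  | zero =>
    convert hasSum_unique (negQMultinomialTerm q n x)
    simp [negQMultinomialTerm, qMultinomial, qFacOrd]
  | succ k ih =>
    have hfiber : ∀ r : Fin k → ℕ, HasSum (fun b => negQMultinomialTerm q n x (Fin.cons b r))
        ((∏ i ∈ range n, (1 + x 0 * q ^ i)) * negQMultinomialTerm q n (Fin.tail x) r) := by
      intro r
      have hD : ∏ i ∈ range (∑ i, r i), (1 + x 0 * q ^ (n + i)) ≠ 0 :=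
        (zero_lt_one.trans_le (one_le_prod_one_add_mul_pow hq0 (hx 0) n _)).ne'
      have h := ((hasSum_negQBinomTerm hq0 hq1 (hx 0) (n + ∑ i, r i)).mul_right
        (negQMultinomialTerm q n (Fin.tail x) r)).div_const
        (∏ i ∈ range (∑ i, r i), (1 + x 0 * q ^ (n + i)))
      rw [prod_range_add, mul_right_comm, mul_div_cancel_right₀ _ hD] at h
      simpa only [negQMultinomialTerm_cons] using h
    have houter : HasSum (fun r => (∏ i ∈ range n, (1 + x 0 * q ^ i))
        * negQMultinomialTerm q n (Fin.tail x) r) (∏ j, ∏ i ∈ range n, (1 + x j * q ^ i)) := by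
      rw [Fin.prod_univ_succ]
      exact (ih (Fin.tail x) fun j => hx _).mul_left _
    rw [← ((Equiv.prodComm _ _).trans (Fin.consEquiv fun _ => ℕ)).hasSum_iff]
    exact hasSum_prod_of_nonneg (fun _ => negQMultinomialTerm_nonneg hq0 hq1 n hx _) hfiber houter

theorem neg_qMultinomial_formula_general (q : ℝ) (hq0 : 0 < q) (hq1 : q < 1)
    (k n : ℕ) (x : Fin k → ℝ) (hx : ∀ j, 0 ≤ x j) :
    HasSum
      (fun r : Fin k → ℕ =>
        qMultinomial q ((n : ℤ) + (∑ i, r i) - 1) r *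
          ∏ j : Fin k,
            x j ^ r j * q ^ (r j * (r j - 1) / 2) /
              ∏ i ∈ Finset.range
                  ((∑ i', r i') - ∑ i' ∈ Finset.univ.filter (fun i' => i' < j), r i'),
                (1 + x j * q ^ (n + i)))
      (∏ j : Fin k, ∏ i ∈ Finset.range n, (1 + x j * q ^ i)) :=
  hasSum_negQMultinomialTerm hq0.le hq1 n k x hx

/-- Negative q-multinomial formula: the family indexed by tuples (r_1,…,r_k) ∈ ℕ^k of terms
    C_q(n+s_k−1; r) ∏_j x_j^(r_j) q^(r_j(r_j−1)/2) / ∏_{i=1}^{s_k−s_{j−1}} (1 + x_j q^(n+i−1))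
    has sum ∏_j ∏_{i=1}^n (1 + x_j q^(i−1)). -/
theorem neg_qMultinomial_formula (q : ℝ) (hq0 : 0 < q) (hq1 : q < 1)
    (k n : ℕ) (hk : 1 ≤ k) (hn : 1 ≤ n) (x : Fin k → ℝ) (hx : ∀ j, 0 ≤ x j) :
    HasSum
      (fun r : Fin k → ℕ =>
        qMultinomial q ((n : ℤ) + (∑ i, r i) - 1) r *
          ∏ j : Fin k,
            x j ^ r j * q ^ (r j * (r j - 1) / 2) /
              ∏ i ∈ Finset.range
                  ((∑ i', r i') - ∑ i' ∈ Finset.univ.filter (fun i' => i' < j), r i'),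
                (1 + x j * q ^ (n + i)))
      (∏ j : Fin k, ∏ i ∈ Finset.range n, (1 + x j * q ^ i)) :=
  neg_qMultinomial_formula_general q hq0 hq1 k n x hx
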